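/- Let n, m, ℓ be nonnegative integers. Then the terminating series satisfies 2F1(-n, ℓ+1; -n-m; z) = (m!(n+ℓ)!/(ℓ!(n+m)!)) · z^n · 2F1(-n, m+1; -n-ℓ; 1/z), for z ≠ 0. -/

import Mathlib

open Finset

noncomputable def poch (x : ℂ) (k : ℕ) : ℂ := (ascPochhammer ℂ k).eval x

/-- Terminating Gauss hypergeometric series `2F1(-n, b; c; z)` as a finite sum. -/
noncomputable def hyp (n : ℕ) (b c : ℂ) (z : ℂ) : ℂ :=
  ∑ k ∈ Finset.range (n + 1),
    poch (-(n : ℂ)) k * poch b k / (poch c k * (Nat.factorial k : ℂ)) * z ^ k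

/-! For these integer parameters every Pochhammer symbol is a ratio of factorials, and the
`k`-th coefficient of `2F1(-n, l+1; -n-m; z)` becomes `C(n,k) (l+k)! (n+m-k)! / (l! (n+m)!)`.
Under `k ↦ n - k` this turns into the `k`-th coefficient with `l` and `m` exchanged, up to the
factor `m! (n+l)! / (l! (n+m)!)`, so reversing the order of summation proves the identity. -/

open Nat

lemma cast_factorial_ne_zero {K : Type*} [Semiring K] [CharZero K] (n : ℕ) : (n ! : K) ≠ 0 :=
  mod_cast factorial_ne_zero n

lemma poch_neg_natCast (N k : ℕ) : poch (-(N : ℂ)) k = (-1) ^ k * N.descFactorial k := by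
  rw [poch, ascPochhammer_eval_neg_eq_descPochhammer, descPochhammer_eval_eq_descFactorial]

lemma factorial_mul_poch_natCast_add_one (l k : ℕ) :
    (l ! : ℂ) * poch ((l : ℂ) + 1) k = (l + k)! := by
  rw [poch, ← Nat.cast_add_one, ascPochhammer_nat_eq_natCast_ascFactorial, ← Nat.cast_mul,
    factorial_mul_ascFactorial]

lemma hyp_coeff_eq_choose_mul_factorial (n m l : ℕ) {k : ℕ} (hk : k ≤ n) :
    poch (-(n : ℂ)) k * poch ((l : ℂ) + 1) k / (poch (-(n : ℂ) - m) k * k !) =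
      n.choose k * (l + k)! * (n + m - k)! / (l ! * (n + m)!) := by
  have hl : poch ((l : ℂ) + 1) k = (l + k)! / l ! := by
    rw [← factorial_mul_poch_natCast_add_one, mul_div_cancel_left₀ _ (cast_factorial_ne_zero l)]
  have hnm : (n + m - k)! * ((n + m).descFactorial k : ℂ) = (n + m)! :=
    mod_cast factorial_mul_descFactorial (by omega)
  have hdesc : ((n + m).descFactorial k : ℂ) ≠ 0 :=
    mod_cast (descFactorial_pos.mpr (by omega)).ne'
  rw [show -(n : ℂ) - m = -((n + m : ℕ) : ℂ) by push_cast; ring, poch_neg_natCast,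
    poch_neg_natCast, hl, descFactorial_eq_factorial_mul_choose, ← hnm]
  have := cast_factorial_ne_zero (K := ℂ) k
  have := cast_factorial_ne_zero (K := ℂ) l
  have := cast_factorial_ne_zero (K := ℂ) (n + m - k)
  push_cast
  field_simp

lemma hyp_eq_sum_choose_mul_factorial (n m l : ℕ) (z : ℂ) :
    hyp n ((l : ℂ) + 1) (-(n : ℂ) - m) z =
      ∑ k ∈ range (n + 1), n.choose k * (l + k)! * (n + m - k)! / (l ! * (n + m)! : ℂ) * z ^ k :=
  sum_congr rfl fun k hk => by
    rw [hyp_coeff_eq_choose_mul_factorial n m l (Nat.lt_succ_iff.mp (mem_range.mp hk))]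

theorem rational_solution_transform_at_infinity (n m l : ℕ) (z : ℂ) (hz : z ≠ 0) :
    hyp n ((l : ℂ) + 1) (-(n : ℂ) - m) z =
      (Nat.factorial m : ℂ) * (Nat.factorial (n + l) : ℂ) /
          ((Nat.factorial l : ℂ) * (Nat.factorial (n + m) : ℂ)) *
        z ^ n * hyp n ((m : ℂ) + 1) (-(n : ℂ) - l) (1 / z) := by
  rw [hyp_eq_sum_choose_mul_factorial, hyp_eq_sum_choose_mul_factorial, mul_sum,
    ← sum_range_reflect]
  refine sum_congr rfl fun j hj => ?_
  have hjn : j ≤ n := Nat.lt_succ_iff.mp (mem_range.mp hj)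
  rw [Nat.add_sub_cancel, choose_symm hjn, show l + (n - j) = n + l - j by omega,
    show n + m - (n - j) = m + j by omega, pow_sub₀ z hz hjn, one_div, inv_pow]
  have := cast_factorial_ne_zero (K := ℂ) m
  have := cast_factorial_ne_zero (K := ℂ) (n + l)
  field_simp
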